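/- Let γ = n/2 and β = 4 + n/2. Suppose for all 0 < v < δ/4, 0 < |t| < 1, and x with |x_1| > δ/2 one has |S_t h_v(x)| ≤ C v/|t|^γ and |S_t h_v(x)| ≤ C |t|/v^β. Let v_k = ε_k v_{k-1}^μ with ε_k = 2^{-k} and μ = max(n, 2+n/4) (so μ ≥ 2γ and μ ≥ β/2), and let t_k satisfy c v_k² ≤ |t_k| ≤ C v_k². Then: (a) ∑_{i=k+1}^∞ |S_{t_k} h_{v_i}(x)| ≤ C' ε_{k+1}; (b) ∑_{i=K}^{k-1} |S_{t_k} h_{v_i}(x)| ≤ C' ε_k². Consequently ∑_{i≠k, i≥K} |S_{t_k} h_{v_i}(x)| → 0 as k → ∞. -/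

import Mathlib

open Filter Finset Topology

/-!
With `ε_k = 2^{-k}`, the scales satisfy `v_k < 1`, so `v_{k+1} = ε_{k+1} v_k^μ ≤ ε_{k+1} v_k^p` for
every `0 ≤ p ≤ μ`; with `p = 1` they at least halve at each step. Hence the tail `∑_{i>k} v_i` is at
most `2 v_{k+1}` and the head `∑_{K ≤ i < k} v_i^{-β}` at most `2 v_{k-1}^{-β}`. At a time
`|t_k| ∼ v_k²` the bound `C v/|t|^γ` therefore gives
`2 C v_{k+1} / (c₁ v_k²)^γ ≤ 2 C ε_{k+1} / c₁^γ` (take `p = 2γ`), and the bound `C |t|/v^β` gives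
`2 C C₁ v_k² / v_{k-1}^β ≤ 2 C C₁ ε_k²` (take `p = β/2`).
-/

theorem tsum_le_two_mul_of_le_of_halving {f u : ℕ → ℝ} (hf : ∀ i, 0 ≤ f i)
    (hfu : ∀ i, f i ≤ u i) (hu : ∀ i, u (i + 1) ≤ 2⁻¹ * u i) :
    ∑' i, f i ≤ 2 * u 0 := by
  have hgeom : ∀ i, f i ≤ u 0 * 2⁻¹ ^ i := fun i =>
    (hfu i).trans <| (le_geom (by norm_num) i fun k _ => hu k).trans_eq (mul_comm _ _)
  have hsum : Summable fun i : ℕ => u 0 * (2 : ℝ)⁻¹ ^ i :=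
    (summable_geometric_of_lt_one (by norm_num) (by norm_num)).mul_left _
  calc ∑' i, f i ≤ ∑' i : ℕ, u 0 * (2 : ℝ)⁻¹ ^ i :=
        (hsum.of_nonneg_of_le hf hgeom).tsum_le_tsum hgeom hsum
    _ = 2 * u 0 := by rw [tsum_mul_left, tsum_geometric_inv_two, mul_comm]

theorem sum_Icc_le_two_mul_of_two_mul_le_succ {w : ℕ → ℝ} {K m : ℕ} (hKm : K ≤ m)
    (hwK : 0 ≤ w K) (hw : ∀ i, K ≤ i → 2 * w i ≤ w (i + 1)) :
    ∑ i ∈ Icc K m, w i ≤ 2 * w m := by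
  induction m, hKm using Nat.le_induction with
  | base => simpa [two_mul] using hwK
  | succ m hKm ih =>
    rw [sum_Icc_succ_top (by omega)]
    linarith [hw m hKm]

theorem tendsto_two_rpow_neg_natCast_atTop :
    Tendsto (fun k : ℕ => (2 : ℝ) ^ (-(k : ℝ))) atTop (𝓝 0) := by
  simp_rw [Real.rpow_neg zero_le_two, Real.rpow_natCast, ← inv_pow]
  exact tendsto_pow_atTop_nhds_zero_of_lt_one (by norm_num) (by norm_num)

structure IsScaleSequence (v : ℕ → ℝ) (μ : ℝ) : Prop where
  pos : ∀ k, 1 ≤ k → 0 < v k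
  one_lt : v 1 < 1
  eq_rec : ∀ k, 2 ≤ k → v k = 2 ^ (-(k : ℝ)) * v (k - 1) ^ μ

namespace IsScaleSequence

variable {v : ℕ → ℝ} {μ : ℝ}

theorem succ_eq (hv : IsScaleSequence v μ) {k : ℕ} (hk : 1 ≤ k) :
    v (k + 1) = 2 ^ (-((k : ℝ) + 1)) * v k ^ μ := by
  simpa using hv.eq_rec (k + 1) (by omega)

theorem lt_one (hv : IsScaleSequence v μ) (hμ : 0 ≤ μ) {k : ℕ} (hk : 1 ≤ k) : v k < 1 := by
  induction k, hk using Nat.le_induction with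
  | base => exact hv.one_lt
  | succ k hk ih =>
    rw [hv.succ_eq hk]
    have hε : (2 : ℝ) ^ (-((k : ℝ) + 1)) < 1 :=
      Real.rpow_lt_one_of_one_lt_of_neg one_lt_two (neg_neg_of_pos (by positivity))
    have hvμ : v k ^ μ ≤ 1 := Real.rpow_le_one (hv.pos k hk).le ih.le hμ
    calc 2 ^ (-((k : ℝ) + 1)) * v k ^ μ ≤ 2 ^ (-((k : ℝ) + 1)) * 1 := by gcongr
      _ < 1 := by rwa [mul_one]

theorem succ_le_rpow (hv : IsScaleSequence v μ) {p : ℝ} (hp : 0 ≤ p) (hpμ : p ≤ μ) {k : ℕ}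
    (hk : 1 ≤ k) : v (k + 1) ≤ 2 ^ (-((k : ℝ) + 1)) * v k ^ p := by
  rw [hv.succ_eq hk]
  refine mul_le_mul_of_nonneg_left ?_ (by positivity)
  exact Real.rpow_le_rpow_of_exponent_ge (hv.pos k hk) (hv.lt_one (hp.trans hpμ) hk).le hpμ

theorem succ_le_half (hv : IsScaleSequence v μ) (hμ : 1 ≤ μ) {k : ℕ} (hk : 1 ≤ k) :
    v (k + 1) ≤ 2⁻¹ * v k := by
  have hε : (2 : ℝ) ^ (-((k : ℝ) + 1)) ≤ 2⁻¹ := by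
    rw [← Real.rpow_neg_one]
    exact Real.rpow_le_rpow_of_exponent_le one_le_two (by linarith [k.cast_nonneg (α := ℝ)])
  calc v (k + 1) ≤ 2 ^ (-((k : ℝ) + 1)) * v k ^ (1 : ℝ) := hv.succ_le_rpow zero_le_one hμ hk
    _ ≤ 2⁻¹ * v k := by rw [Real.rpow_one]; gcongr; exact (hv.pos k hk).le

theorem two_mul_rpow_succ_le (hv : IsScaleSequence v μ) (hμ : 1 ≤ μ) {β : ℝ} (hβ : 1 ≤ β)
    {k : ℕ} (hk : 1 ≤ k) : 2 * v (k + 1) ^ β ≤ v k ^ β := by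
  have hvk := hv.pos k hk
  have hhalf : (2 : ℝ)⁻¹ ^ β ≤ 2⁻¹ := by
    simpa using Real.rpow_le_rpow_of_exponent_ge (by norm_num) (by norm_num) hβ
  calc 2 * v (k + 1) ^ β ≤ 2 * (2⁻¹ * v k) ^ β := by
        gcongr
        · exact (hv.pos (k + 1) (by omega)).le
        · exact hv.succ_le_half hμ hk
    _ = 2 * 2⁻¹ ^ β * v k ^ β := by rw [Real.mul_rpow (by norm_num) hvk.le, mul_assoc]
    _ ≤ 2 * 2⁻¹ * v k ^ β := by gcongr
    _ = v k ^ β := by norm_num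

theorem tsum_tail_le (hv : IsScaleSequence v μ) (hμ : 1 ≤ μ) {γ C c₁ T : ℝ} (hγ : 0 ≤ γ)
    (hγμ : 2 * γ ≤ μ) (hC : 0 ≤ C) (hc₁ : 0 < c₁) {k : ℕ} (hk : 1 ≤ k)
    (hT : c₁ * v k ^ 2 ≤ T) {f : ℕ → ℝ} (hf : ∀ i, 0 ≤ f i)
    (hfb : ∀ i, 1 ≤ i → f i ≤ C * v i / T ^ γ) :
    ∑' i, f (k + 1 + i) ≤ 2 * C / c₁ ^ γ * 2 ^ (-((k : ℝ) + 1)) := by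
  have hvk := hv.pos k hk
  have hTγ : c₁ ^ γ * v k ^ (2 * γ) ≤ T ^ γ := by
    calc c₁ ^ γ * v k ^ (2 * γ) = (c₁ * v k ^ 2) ^ γ := by
          rw [Real.mul_rpow hc₁.le (by positivity), ← Real.rpow_natCast_mul hvk.le]
          norm_num
      _ ≤ T ^ γ := Real.rpow_le_rpow (by positivity) hT hγ
  have hT0 : 0 ≤ T := (by positivity : 0 ≤ c₁ * v k ^ 2).trans hT
  have hCT : 0 ≤ C / T ^ γ := div_nonneg hC (Real.rpow_nonneg hT0 γ)
  calc ∑' i, f (k + 1 + i) ≤ 2 * (C / T ^ γ * v (k + 1 + 0)) := by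
        refine tsum_le_two_mul_of_le_of_halving (fun i => hf _)
          (fun i => (hfb (k + 1 + i) (by omega)).trans_eq (div_mul_eq_mul_div _ _ _).symm)
          (fun i => ?_)
        rw [mul_left_comm]
        exact mul_le_mul_of_nonneg_left (hv.succ_le_half hμ (k := k + 1 + i) (by omega)) hCT
    _ = 2 * C * (v (k + 1) / T ^ γ) := by ring
    _ ≤ 2 * C * (2 ^ (-((k : ℝ) + 1)) * v k ^ (2 * γ) / (c₁ ^ γ * v k ^ (2 * γ))) := by
        gcongr
        exact hv.succ_le_rpow (by positivity) hγμ hk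
    _ = 2 * C / c₁ ^ γ * 2 ^ (-((k : ℝ) + 1)) := by
        rw [mul_div_mul_right _ _ (by positivity)]
        ring

theorem sum_head_le (hv : IsScaleSequence v μ) (hμ : 1 ≤ μ) {β C C₁ T : ℝ} (hβ : 1 ≤ β)
    (hβμ : β ≤ 2 * μ) (hC : 0 ≤ C) (hC₁ : 0 ≤ C₁) {K k : ℕ} (hK : 1 ≤ K) (hk : K + 1 ≤ k)
    (hT : T ≤ C₁ * v k ^ 2) {f : ℕ → ℝ} (hfb : ∀ i, 1 ≤ i → f i ≤ C * T / v i ^ β) :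
    ∑ i ∈ Icc K (k - 1), f i ≤ 2 * C * C₁ * (2 ^ (-(k : ℝ))) ^ 2 := by
  obtain ⟨j, rfl⟩ : ∃ j, k = j + 1 := ⟨k - 1, by omega⟩
  have hvj := hv.pos j (by omega)
  have hvβ : ∀ i, K ≤ i → 0 < v i ^ β := fun i hi => Real.rpow_pos_of_pos (hv.pos i (by omega)) β
  have hreciprocals : ∑ i ∈ Icc K j, 1 / v i ^ β ≤ 2 * (1 / v j ^ β) := by
    refine sum_Icc_le_two_mul_of_two_mul_le_succ (by omega) (one_div_pos.2 (hvβ K le_rfl)).le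
      fun i hi => ?_
    rw [mul_one_div, div_le_div_iff₀ (hvβ i hi) (hvβ (i + 1) (by omega)), one_mul]
    exact hv.two_mul_rpow_succ_le hμ hβ (by omega)
  have hvsq : v (j + 1) ^ 2 ≤ (2 ^ (-((j : ℝ) + 1))) ^ 2 * v j ^ β := by
    calc v (j + 1) ^ 2 ≤ (2 ^ (-((j : ℝ) + 1)) * v j ^ (β / 2)) ^ 2 := by
          gcongr
          · exact (hv.pos _ (by omega)).le
          · exact hv.succ_le_rpow (by linarith) (by linarith) (by omega)
      _ = (2 ^ (-((j : ℝ) + 1))) ^ 2 * v j ^ β := by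
          rw [mul_pow, ← Real.rpow_mul_natCast hvj.le]
          norm_num
  calc ∑ i ∈ Icc K (j + 1 - 1), f i ≤ ∑ i ∈ Icc K j, C * T * (1 / v i ^ β) := by
        refine sum_le_sum fun i hi => (hfb i ?_).trans_eq (by ring)
        have := (mem_Icc.1 hi).1
        omega
    _ = C * T * ∑ i ∈ Icc K j, 1 / v i ^ β := (mul_sum _ _ _).symm
    _ ≤ C * (C₁ * v (j + 1) ^ 2) * (2 * (1 / v j ^ β)) := by
        gcongr
        exact sum_nonneg fun i hi => (one_div_pos.2 (hvβ i (mem_Icc.1 hi).1)).le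
    _ ≤ C * (C₁ * ((2 ^ (-((j : ℝ) + 1))) ^ 2 * v j ^ β)) * (2 * (1 / v j ^ β)) := by
        gcongr
    _ = 2 * C * C₁ * (2 ^ (-((j + 1 : ℕ) : ℝ))) ^ 2 := by
        field_simp [(hvβ j (by omega)).ne']
        push_cast
        ring

end IsScaleSequence

theorem stmt16_general (n : ℕ) (γ β μ : ℝ)
    (hγ : γ = (n : ℝ) / 2) (hβ : β = 4 + (n : ℝ) / 2)
    (hμ : μ = max (n : ℝ) (2 + (n : ℝ) / 4))
    (v : ℕ → ℝ) (hpos : ∀ k, 1 ≤ k → 0 < v k) (hv1 : v 1 < 1)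
    (hrec : ∀ k, 2 ≤ k → v k = 2 ^ (-(k : ℝ)) * v (k - 1) ^ μ)
    (C c₁ C₁ : ℝ) (hC : 0 < C) (hc₁ : 0 < c₁) (hC₁ : 0 < C₁)
    (t : ℕ → ℝ)
    (ht : ∀ k, 1 ≤ k → c₁ * v k ^ 2 ≤ |t k| ∧ |t k| ≤ C₁ * v k ^ 2)
    (b : ℕ → ℕ → ℝ) (hbnn : ∀ k i, 0 ≤ b k i)
    (hb1 : ∀ k i, 1 ≤ k → 1 ≤ i → b k i ≤ C * v i / |t k| ^ γ)
    (hb2 : ∀ k i, 1 ≤ k → 1 ≤ i → b k i ≤ C * |t k| / v i ^ β)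
    (K : ℕ) (hK : 1 ≤ K) :
    ∃ C' : ℝ, 0 < C' ∧
      (∀ k, K ≤ k → (∑' i : ℕ, b k (k + 1 + i)) ≤ C' * 2 ^ (-((k : ℝ) + 1))) ∧
      (∀ k, K + 1 ≤ k → (∑ i ∈ Finset.Icc K (k - 1), b k i) ≤ C' * (2 ^ (-(k : ℝ))) ^ 2) ∧
      Filter.Tendsto
        (fun k : ℕ => (∑' i : ℕ, b k (k + 1 + i)) + ∑ i ∈ Finset.Icc K (k - 1), b k i)
        Filter.atTop (nhds 0) := by
  have hv : IsScaleSequence v μ := ⟨hpos, hv1, hrec⟩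
  have hn : (0 : ℝ) ≤ n := n.cast_nonneg
  have hμ1 : 1 ≤ μ := by rw [hμ]; exact le_max_of_le_right (by linarith)
  have hγμ : 2 * γ ≤ μ := by rw [hγ, hμ]; exact le_max_of_le_left (by linarith)
  have hβμ : β ≤ 2 * μ := by rw [hβ, hμ]; linarith [le_max_right (n : ℝ) (2 + n / 4)]
  set C' := 2 * C / c₁ ^ γ + 2 * C * C₁
  have htail : ∀ k, K ≤ k → ∑' i, b k (k + 1 + i) ≤ C' * 2 ^ (-((k : ℝ) + 1)) := fun k hk =>
    (hv.tsum_tail_le hμ1 (by rw [hγ]; positivity) hγμ hC.le hc₁ (by omega) (ht k (by omega)).1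
      (hbnn k) fun i hi => hb1 k i (by omega) hi).trans <| by
      gcongr; exact le_add_of_nonneg_right (by positivity)
  have hhead : ∀ k, K + 1 ≤ k → ∑ i ∈ Icc K (k - 1), b k i ≤ C' * (2 ^ (-(k : ℝ))) ^ 2 :=
    fun k hk => (hv.sum_head_le hμ1 (by rw [hβ]; linarith) hβμ hC.le
      hC₁.le hK hk (ht k (by omega)).2 fun i hi => hb2 k i (by omega) hi).trans <| by
      gcongr; exact le_add_of_nonneg_left (by positivity)
  refine ⟨C', by positivity, htail, hhead, ?_⟩
  have hε : Tendsto (fun k : ℕ => (2 : ℝ) ^ (-(k : ℝ))) atTop (𝓝 0) :=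
    tendsto_two_rpow_neg_natCast_atTop
  have hε' : Tendsto (fun k : ℕ => (2 : ℝ) ^ (-((k : ℝ) + 1))) atTop (𝓝 0) := by
    simpa only [Function.comp_def, Nat.cast_add, Nat.cast_one] using
      hε.comp (tendsto_add_atTop_nat 1)
  refine squeeze_zero' (Eventually.of_forall fun k => add_nonneg (tsum_nonneg fun i => hbnn _ _)
    (sum_nonneg fun i _ => hbnn _ _)) ((eventually_ge_atTop (K + 1)).mono fun k hk =>
      add_le_add (htail k (by omega)) (hhead k hk)) ?_
  simpa using (hε'.const_mul C').add ((hε.pow 2).const_mul C')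

/-- with `γ = n/2`, `β = 4 + n/2`, `|S_t h_v(x)| ≤ C v/|t|^γ` and
`|S_t h_v(x)| ≤ C|t|/v^β` (encoded by the quantities `b k i = |S_{t_k} h_{v_i}(x)|`),
`v_k = ε_k v_{k-1}^μ`, `|t_k| ∼ v_k²`: (a) `∑_{i ≥ k+1} b k i ≤ C' ε_{k+1}`;
(b) `∑_{i=K}^{k-1} b k i ≤ C' ε_k²`; consequently the off-diagonal sum tends to 0. -/
theorem stmt16 (n : ℕ) (hn : 2 ≤ n) (γ β μ : ℝ)
    (hγ : γ = (n : ℝ) / 2) (hβ : β = 4 + (n : ℝ) / 2)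
    (hμ : μ = max (n : ℝ) (2 + (n : ℝ) / 4))
    (v : ℕ → ℝ) (hpos : ∀ k, 1 ≤ k → 0 < v k) (hv1 : v 1 < 1)
    (hrec : ∀ k, 2 ≤ k → v k = 2 ^ (-(k : ℝ)) * v (k - 1) ^ μ)
    (C c₁ C₁ : ℝ) (hC : 0 < C) (hc₁ : 0 < c₁) (hC₁ : 0 < C₁)
    (t : ℕ → ℝ)
    (ht : ∀ k, 1 ≤ k → c₁ * v k ^ 2 ≤ |t k| ∧ |t k| ≤ C₁ * v k ^ 2)
    (b : ℕ → ℕ → ℝ) (hbnn : ∀ k i, 0 ≤ b k i)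
    (hb1 : ∀ k i, 1 ≤ k → 1 ≤ i → b k i ≤ C * v i / |t k| ^ γ)
    (hb2 : ∀ k i, 1 ≤ k → 1 ≤ i → b k i ≤ C * |t k| / v i ^ β)
    (K : ℕ) (hK : 1 ≤ K) :
    ∃ C' : ℝ, 0 < C' ∧
      (∀ k, K ≤ k → (∑' i : ℕ, b k (k + 1 + i)) ≤ C' * 2 ^ (-((k : ℝ) + 1))) ∧
      (∀ k, K + 1 ≤ k → (∑ i ∈ Finset.Icc K (k - 1), b k i) ≤ C' * (2 ^ (-(k : ℝ))) ^ 2) ∧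
      Filter.Tendsto
        (fun k : ℕ => (∑' i : ℕ, b k (k + 1 + i)) + ∑ i ∈ Finset.Icc K (k - 1), b k i)
        Filter.atTop (nhds 0) :=
  stmt16_general n γ β μ hγ hβ hμ v hpos hv1 hrec C c₁ C₁ hC hc₁ hC₁ t ht b hbnn hb1 hb2 K hK
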